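/- arXiv:2405.05509 — 2 statements merged into one kernel-verified Lean document; each statement's English description precedes it below -/
import Mathlib

section
/- Let X and Y be real Banach spaces and S : X → Y a bounded linear operator. Then for every real α > 0 and every n ≥ 1, the n-th Gelfand number satisfies c_n(S) ≤ e^α · n^{−α+1} · sup_{1 ≤ k ≤ n} k^α h_k(S), where h_k are the Hilbert numbers. -/
/-!
Let `ρ < c_n(S)`. Choosing each `x_j` in the joint kernel of `b_1 ∘ S, …, b_{j-1} ∘ S`, a closed
subspace of codimension `< n`, gives vectors `x_j` and functionals `b_i`, all of norm `≤ 1`, with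
`b_i (S x_j) = 0` for `i < j` and `b_i (S x_i) > ρ`. The triangular matrix `M = (b_i (S x_j))`
therefore has `|det M| ≥ ρⁿ`. It is the matrix of `B S A` for `A : ℓ₂ⁿ → X, v ↦ ∑ vᵢ xᵢ` and
`B : Y → ℓ₂ⁿ, y ↦ (bᵢ y)ᵢ`, both of norm `≤ √n`. As `|det M|` is the product of the singular
values of `B S A`, and the `k`-th of them is at most `a_k(B S A) ≤ n h_k(S)`, we get
`ρⁿ ≤ nⁿ ∏ h_k(S) ≤ nⁿ σⁿ / (n!)^α` with `σ = sup k^α h_k(S)`; now `nⁿ ≤ eⁿ n!`.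
-/

/-- The real Hilbert sequence space ℓ₂ = lp(ℕ, 2). -/
abbrev Ell2 : Type := lp (fun _ : ℕ => ℝ) 2

/-- Approximation numbers. -/
noncomputable def approxNumber {X Y : Type*} [NormedAddCommGroup X] [NormedSpace ℝ X]
    [NormedAddCommGroup Y] [NormedSpace ℝ Y] (n : ℕ) (S : X →L[ℝ] Y) : ℝ :=
  sInf {r : ℝ | ∃ L : X →L[ℝ] Y, LinearMap.rank (L : X →ₗ[ℝ] Y) < n ∧ r = ‖S - L‖}

/-- Gelfand numbers. -/
noncomputable def gelfandNumber {X Y : Type*} [NormedAddCommGroup X] [NormedSpace ℝ X]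
    [NormedAddCommGroup Y] [NormedSpace ℝ Y] (n : ℕ) (S : X →L[ℝ] Y) : ℝ :=
  sInf {r : ℝ | ∃ M : Submodule ℝ X, IsClosed (M : Set X) ∧ Module.rank ℝ (X ⧸ M) < n ∧
    r = ‖S.comp M.subtypeL‖}

/-- The canonical quotient map onto `Y ⧸ N`, as a continuous linear map (with respect to
the quotient (semi)norm). -/
noncomputable def quotientCLM {Y : Type*} [NormedAddCommGroup Y] [NormedSpace ℝ Y]
    (N : Submodule ℝ Y) : Y →L[ℝ] Y ⧸ N :=
  LinearMap.mkContinuous N.mkQ 1 fun y => by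
    simpa using Submodule.Quotient.norm_mk_le N y

/-- Kolmogorov numbers. -/
noncomputable def kolmogorovNumber {X Y : Type*} [NormedAddCommGroup X] [NormedSpace ℝ X]
    [NormedAddCommGroup Y] [NormedSpace ℝ Y] (n : ℕ) (S : X →L[ℝ] Y) : ℝ :=
  sInf {r : ℝ | ∃ N : Submodule ℝ Y, Module.rank ℝ N < n ∧ r = ‖(quotientCLM N).comp S‖}

/-- Hilbert numbers. -/
noncomputable def hilbertNumber {X Y : Type*} [NormedAddCommGroup X] [NormedSpace ℝ X]
    [NormedAddCommGroup Y] [NormedSpace ℝ Y] (n : ℕ) (S : X →L[ℝ] Y) : ℝ :=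
  sSup {r : ℝ | ∃ (A : Ell2 →L[ℝ] X) (B : Y →L[ℝ] Ell2), A ≠ 0 ∧ B ≠ 0 ∧
    r = approxNumber n (B.comp (S.comp A)) / (‖B‖ * ‖A‖)}


open Module

section ApproxNumber

variable {W X Y Z : Type*} [NormedAddCommGroup W] [NormedSpace ℝ W]
  [NormedAddCommGroup X] [NormedSpace ℝ X] [NormedAddCommGroup Y] [NormedSpace ℝ Y]
  [NormedAddCommGroup Z] [NormedSpace ℝ Z]

theorem ContinuousLinearMap.opNorm_comp_comp_le (U : Y →L[ℝ] Z) (T : X →L[ℝ] Y) (V : W →L[ℝ] X) :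
    ‖U ∘L T ∘L V‖ ≤ ‖U‖ * ‖V‖ * ‖T‖ :=
  calc ‖U ∘L T ∘L V‖ ≤ ‖U‖ * (‖T‖ * ‖V‖) :=
        (U.opNorm_comp_le _).trans (by gcongr; exact T.opNorm_comp_le V)
    _ = ‖U‖ * ‖V‖ * ‖T‖ := by ring

theorem LinearMap.rank_comp_comp_lt {k : ℕ} (U : Y →ₗ[ℝ] Z) (L : X →ₗ[ℝ] Y) (V : W →ₗ[ℝ] X)
    (hL : L.rank < k) : (U ∘ₗ L ∘ₗ V).rank < k := by
  refine Cardinal.lift_lt_nat_iff.1 <| (lift_rank_comp_le_right (L ∘ₗ V) U).trans_lt ?_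
  exact (Cardinal.lift_le.2 (rank_comp_le_left V L)).trans_lt (Cardinal.lift_lt_nat_iff.2 hL)

@[simp]
theorem approxNumber_zero_left (T : X →L[ℝ] Y) : approxNumber 0 T = 0 := by
  simp [approxNumber]

theorem approxNumber_nonneg (k : ℕ) (T : X →L[ℝ] Y) : 0 ≤ approxNumber k T :=
  Real.sInf_nonneg fun _ ⟨_, _, hr⟩ => hr ▸ norm_nonneg _

theorem approxNumber_le {k : ℕ} (T L : X →L[ℝ] Y) (hL : (L : X →ₗ[ℝ] Y).rank < k) :
    approxNumber k T ≤ ‖T - L‖ :=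
  csInf_le ⟨0, fun _ ⟨_, _, hr⟩ => hr ▸ norm_nonneg _⟩ ⟨L, hL, rfl⟩

theorem ContinuousLinearMap.rank_coe_zero_lt {k : ℕ} (hk : k ≠ 0) :
    ((0 : X →L[ℝ] Y) : X →ₗ[ℝ] Y).rank < k := by
  simpa using Nat.pos_of_ne_zero hk

theorem approxNumber_le_norm (k : ℕ) (T : X →L[ℝ] Y) : approxNumber k T ≤ ‖T‖ := by
  obtain rfl | hk := eq_or_ne k 0
  · simp
  · simpa using approxNumber_le T 0 (ContinuousLinearMap.rank_coe_zero_lt hk)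

theorem le_approxNumber {k : ℕ} (hk : k ≠ 0) (T : X →L[ℝ] Y) {c : ℝ}
    (h : ∀ L : X →L[ℝ] Y, (L : X →ₗ[ℝ] Y).rank < k → c ≤ ‖T - L‖) : c ≤ approxNumber k T :=
  le_csInf ⟨‖T‖, 0, ContinuousLinearMap.rank_coe_zero_lt hk, by simp⟩ fun _ ⟨L, hL, hr⟩ =>
    hr ▸ h L hL

theorem approxNumber_comp_comp_le (k : ℕ) (U : Y →L[ℝ] Z) (T : X →L[ℝ] Y) (V : W →L[ℝ] X) :
    approxNumber k (U ∘L T ∘L V) ≤ ‖U‖ * ‖V‖ * approxNumber k T := by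
  obtain rfl | hk := eq_or_ne k 0
  · simp
  obtain hK | hK := (mul_nonneg (norm_nonneg U) (norm_nonneg V)).eq_or_lt
  · calc approxNumber k (U ∘L T ∘L V) ≤ ‖U‖ * ‖V‖ * ‖T‖ :=
          (approxNumber_le_norm k _).trans (U.opNorm_comp_comp_le T V)
      _ = ‖U‖ * ‖V‖ * approxNumber k T := by rw [← hK, zero_mul, zero_mul]
  rw [← div_le_iff₀' hK]
  refine le_approxNumber hk T fun L hL => (div_le_iff₀' hK).2 ?_
  calc approxNumber k (U ∘L T ∘L V) ≤ ‖U ∘L T ∘L V - U ∘L L ∘L V‖ :=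
        approxNumber_le _ _ (LinearMap.rank_comp_comp_lt _ _ _ hL)
    _ = ‖U ∘L (T - L) ∘L V‖ := by rw [ContinuousLinearMap.sub_comp, ContinuousLinearMap.comp_sub]
    _ ≤ ‖U‖ * ‖V‖ * ‖T - L‖ := U.opNorm_comp_comp_le _ V

end ApproxNumber

section HilbertNumber

variable {X Y : Type*} [NormedAddCommGroup X] [NormedSpace ℝ X]
  [NormedAddCommGroup Y] [NormedSpace ℝ Y]

theorem hilbertNumber_nonneg (k : ℕ) (S : X →L[ℝ] Y) : 0 ≤ hilbertNumber k S :=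
  Real.sSup_nonneg fun _ ⟨_, _, _, _, hr⟩ =>
    hr ▸ div_nonneg (approxNumber_nonneg _ _) (by positivity)

theorem approxNumber_comp_comp_le_hilbertNumber_mul_of_ell2 (k : ℕ) (S : X →L[ℝ] Y)
    (A : Ell2 →L[ℝ] X) (B : Y →L[ℝ] Ell2) :
    approxNumber k (B ∘L S ∘L A) ≤ hilbertNumber k S * (‖B‖ * ‖A‖) := by
  by_cases hAB : A = 0 ∨ B = 0
  · have h0 : B ∘L S ∘L A = 0 := by rcases hAB with rfl | rfl <;> simp
    have := hilbertNumber_nonneg k S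
    calc approxNumber k (B ∘L S ∘L A) ≤ 0 := by
          simpa [h0] using approxNumber_le_norm k (0 : Ell2 →L[ℝ] Ell2)
      _ ≤ hilbertNumber k S * (‖B‖ * ‖A‖) := by positivity
  push Not at hAB
  rw [← div_le_iff₀ (mul_pos (norm_pos_iff.2 hAB.2) (norm_pos_iff.2 hAB.1))]
  refine le_csSup ⟨‖S‖, ?_⟩ ⟨A, B, hAB.1, hAB.2, rfl⟩
  rintro _ ⟨A', B', hA', hB', rfl⟩
  rw [div_le_iff₀ (mul_pos (norm_pos_iff.2 hB') (norm_pos_iff.2 hA'))]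
  calc approxNumber k (B' ∘L S ∘L A') ≤ ‖B'‖ * ‖A'‖ * ‖S‖ :=
        (approxNumber_le_norm k _).trans (B'.opNorm_comp_comp_le S A')
    _ = ‖S‖ * (‖B'‖ * ‖A'‖) := mul_comm _ _

theorem nonempty_linearIsometry_ell2 (E : Type*) [NormedAddCommGroup E] [InnerProductSpace ℝ E]
    [FiniteDimensional ℝ E] : Nonempty (E →ₗᵢ[ℝ] Ell2) := by
  classical
  let b := stdOrthonormalBasis ℝ E
  let e : Fin (finrank ℝ E) → Ell2 := fun i => lp.single 2 (i : ℕ) 1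
  have he : Orthonormal ℝ (b.toBasis.constr ℝ e ∘ b.toBasis) := by
    rw [orthonormal_iff_ite]
    intro i j
    simp [e, lp.inner_single_left, lp.single_apply, Pi.single_apply, Fin.val_inj]
  exact ⟨(b.toBasis.constr ℝ e).isometryOfOrthonormal b.orthonormal he⟩

theorem approxNumber_comp_comp_le_hilbertNumber_mul {E : Type*} [NormedAddCommGroup E]
    [InnerProductSpace ℝ E] [FiniteDimensional ℝ E] (k : ℕ) (S : X →L[ℝ] Y)
    (A : E →L[ℝ] X) (B : Y →L[ℝ] E) :
    approxNumber k (B ∘L S ∘L A) ≤ hilbertNumber k S * (‖B‖ * ‖A‖) := by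
  obtain ⟨J⟩ := nonempty_linearIsometry_ell2 E
  set P := ContinuousLinearMap.adjoint J.toContinuousLinearMap
  have hPJ (v : E) : P (J v) = v := DFunLike.congr_fun J.adjoint_comp_self v
  have hP : ‖P‖ ≤ 1 := by
    rw [LinearIsometryEquiv.norm_map]; exact J.norm_toContinuousLinearMap_le
  have hfactor : B ∘L S ∘L A =
      P ∘L ((J.toContinuousLinearMap ∘L B) ∘L S ∘L (A ∘L P)) ∘L J.toContinuousLinearMap := by
    ext v; simp [hPJ]
  calc approxNumber k (B ∘L S ∘L A)
      ≤ ‖P‖ * ‖J.toContinuousLinearMap‖ *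
          approxNumber k ((J.toContinuousLinearMap ∘L B) ∘L S ∘L (A ∘L P)) :=
        hfactor ▸ approxNumber_comp_comp_le k _ _ _
    _ ≤ approxNumber k ((J.toContinuousLinearMap ∘L B) ∘L S ∘L (A ∘L P)) :=
        mul_le_of_le_one_left (approxNumber_nonneg _ _)
          (mul_le_one₀ hP (norm_nonneg _) J.norm_toContinuousLinearMap_le)
    _ ≤ hilbertNumber k S * (‖J.toContinuousLinearMap ∘L B‖ * ‖A ∘L P‖) :=
        approxNumber_comp_comp_le_hilbertNumber_mul_of_ell2 k S _ _
    _ ≤ hilbertNumber k S * (‖B‖ * ‖A‖) := by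
        have := hilbertNumber_nonneg k S
        gcongr
        · exact (J.toContinuousLinearMap.opNorm_comp_le B).trans
            (mul_le_of_le_one_left (norm_nonneg _) J.norm_toContinuousLinearMap_le)
        · exact (A.opNorm_comp_le P).trans (mul_le_of_le_one_right (norm_nonneg _) hP)

end HilbertNumber

theorem Submodule.exists_mem_ne_zero_map_eq_zero_of_rank_lt {K E F : Type*} [DivisionRing K]
    [AddCommGroup E] [Module K E] [FiniteDimensional K E] [AddCommGroup F] [Module K F]
    {V : Submodule K E} {L : E →ₗ[K] F} (h : L.rank < finrank K V) :
    ∃ x ∈ V, x ≠ 0 ∧ L x = 0 := by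
  have hlt : finrank K (LinearMap.range L) < finrank K V := by
    rwa [LinearMap.rank, ← finrank_eq_rank, Nat.cast_lt] at h
  obtain ⟨x, hx, hx0⟩ := Submodule.exists_mem_ne_zero_of_ne_bot
    (LinearMap.ker_ne_bot_of_finrank_lt (f := L.rangeRestrict ∘ₗ V.subtype) hlt)
  refine ⟨x, x.2, by simpa using hx0, ?_⟩
  simpa [Subtype.ext_iff] using hx

section SingularValues

open scoped InnerProductSpace

variable {E F : Type*} [NormedAddCommGroup E] [InnerProductSpace ℝ E] [FiniteDimensional ℝ E]
  [NormedAddCommGroup F] [InnerProductSpace ℝ F] [FiniteDimensional ℝ F]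

theorem LinearMap.IsSymmetric.eigenvalues_mul_norm_sq_le_inner {G : E →ₗ[ℝ] E}
    (hG : G.IsSymmetric) {n : ℕ} (hn : finrank ℝ E = n) {k : Fin n} {x : E}
    (hx : ∀ i, k < i → ⟪hG.eigenvectorBasis hn i, x⟫_ℝ = 0) :
    hG.eigenvalues hn k * ‖x‖ ^ 2 ≤ ⟪G x, x⟫_ℝ := by
  have hGx : ⟪G x, x⟫_ℝ = ∑ i, hG.eigenvalues hn i * ⟪hG.eigenvectorBasis hn i, x⟫_ℝ ^ 2 := by
    rw [← (hG.eigenvectorBasis hn).sum_inner_mul_inner]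
    refine Finset.sum_congr rfl fun i _ => ?_
    rw [hG, hG.apply_eigenvectorBasis, real_inner_comm x, RCLike.ofReal_real_eq_id, id_eq,
      real_inner_smul_right]
    ring
  rw [← (hG.eigenvectorBasis hn).sum_sq_norm_inner_right x, hGx, Finset.mul_sum]
  refine Finset.sum_le_sum fun i _ => ?_
  obtain hik | hki := le_or_gt i k
  · rw [Real.norm_eq_abs, sq_abs]
    exact mul_le_mul_of_nonneg_right (hG.eigenvalues_antitone hn hik) (sq_nonneg _)
  · simp [hx i hki]

theorem ContinuousLinearMap.singularValues_le_norm_sub (T L : E →L[ℝ] F) {k : ℕ}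
    (hL : (L : E →ₗ[ℝ] F).rank < k + 1) :
    (T : E →ₗ[ℝ] F).singularValues k ≤ ‖T - L‖ := by
  obtain hk | hk := le_or_gt (finrank ℝ E) k
  · rw [LinearMap.singularValues_of_finrank_le _ hk]; exact norm_nonneg _
  set G := LinearMap.adjoint (T : E →ₗ[ℝ] F) ∘ₗ (T : E →ₗ[ℝ] F)
  have hG : G.IsSymmetric := LinearMap.isSymmetric_adjoint_comp_self _
  set v := hG.eigenvectorBasis rfl
  set k' : Fin (finrank ℝ E) := ⟨k, hk⟩
  set V := Submodule.span ℝ (Set.range fun i : Finset.Iic k' => v i)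
  have hV : finrank ℝ V = k + 1 := by
    rw [finrank_span_eq_card (b := fun i : Finset.Iic k' => v i)
      (v.orthonormal.linearIndependent.comp _ Subtype.val_injective),
      Fintype.card_coe, Fin.card_Iic]
  obtain ⟨x, hxV, hx0, hLx⟩ :=
    Submodule.exists_mem_ne_zero_map_eq_zero_of_rank_lt (by rwa [hV, Nat.cast_succ])
  have horth (i) (hi : k' < i) : ⟪v i, x⟫_ℝ = 0 := by
    have hVi : V ≤ (ℝ ∙ v i)ᗮ := by
      refine Submodule.span_le.2 ?_
      rintro _ ⟨j, rfl⟩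
      refine Submodule.mem_orthogonal_singleton_iff_inner_right.2 (v.orthonormal.2 ?_)
      exact (Finset.mem_Iic.1 j.2).trans_lt hi |>.ne'
    exact Submodule.mem_orthogonal_singleton_iff_inner_right.1 (hVi hxV)
  have hGx : ⟪G x, x⟫_ℝ = ‖T x‖ ^ 2 := by
    rw [LinearMap.comp_apply, LinearMap.adjoint_inner_left, real_inner_self_eq_norm_sq]; rfl
  have hTx : ‖T x‖ ≤ ‖T - L‖ * ‖x‖ := by
    simpa [show L x = 0 from hLx] using (T - L).le_opNorm x
  have hxpos : 0 < ‖x‖ := norm_pos_iff.2 hx0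
  have hsq : ((T : E →ₗ[ℝ] F).singularValues k * ‖x‖) ^ 2 ≤ (‖T - L‖ * ‖x‖) ^ 2 := by
    rw [mul_pow, LinearMap.sq_singularValues_of_lt _ rfl hk]
    calc _ ≤ ⟪G x, x⟫_ℝ := hG.eigenvalues_mul_norm_sq_le_inner rfl horth
      _ = ‖T x‖ ^ 2 := hGx
      _ ≤ (‖T - L‖ * ‖x‖) ^ 2 := by gcongr
  exact le_of_mul_le_mul_right (le_of_sq_le_sq hsq (by positivity)) hxpos

theorem ContinuousLinearMap.singularValues_le_approxNumber (T : E →L[ℝ] F) (k : ℕ) :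
    (T : E →ₗ[ℝ] F).singularValues k ≤ approxNumber (k + 1) T :=
  le_approxNumber k.succ_ne_zero T fun L hL =>
    T.singularValues_le_norm_sub L (by exact_mod_cast hL)

theorem abs_det_le_prod_approxNumber (T : E →L[ℝ] E) :
    |LinearMap.det (T : E →ₗ[ℝ] E)| ≤
      ∏ k ∈ Finset.range (finrank ℝ E), approxNumber (k + 1) T := by
  rw [← LinearMap.normDet_eq_abs_det, LinearMap.normDet_eq_prod_singularValues]
  exact Finset.prod_le_prod (fun k _ => LinearMap.singularValues_nonneg _ k)
    fun k _ => T.singularValues_le_approxNumber k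

end SingularValues

section GelfandNumber

variable {X Y : Type*} [NormedAddCommGroup X] [NormedSpace ℝ X]
  [NormedAddCommGroup Y] [NormedSpace ℝ Y]

theorem gelfandNumber_le (S : X →L[ℝ] Y) {n : ℕ} {M : Submodule ℝ X}
    (hM : IsClosed (M : Set X)) (hMn : Module.rank ℝ (X ⧸ M) < n) :
    gelfandNumber n S ≤ ‖S ∘L M.subtypeL‖ :=
  csInf_le ⟨0, fun _ ⟨M, _, _, hr⟩ => hr ▸ norm_nonneg (S ∘L M.subtypeL)⟩ ⟨M, hM, hMn, rfl⟩

theorem rank_quotient_iInf_ker_le {ι : Type*} [Fintype ι] (f : ι → StrongDual ℝ X) :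
    Module.rank ℝ (X ⧸ ⨅ i, LinearMap.ker (f i : X →ₗ[ℝ] ℝ)) ≤ Fintype.card ι := by
  let Φ := LinearMap.pi fun i => (f i : X →ₗ[ℝ] ℝ)
  have hΦ : Module.rank ℝ (LinearMap.range Φ) ≤ Fintype.card ι :=
    (Submodule.rank_le _).trans rank_fun'.le
  rw [← LinearMap.ker_pi]
  exact Cardinal.lift_le_nat_iff.1 <|
    Φ.quotKerEquivRange.lift_rank_eq.trans_le (Cardinal.lift_le_nat_iff.2 hΦ)

theorem exists_norm_le_one_lt_apply_of_lt_gelfandNumber (S : X →L[ℝ] Y) {n : ℕ} {ρ : ℝ}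
    (hρ : ρ < gelfandNumber n S) {ι : Type*} [Fintype ι] (hι : Fintype.card ι < n)
    (f : ι → StrongDual ℝ Y) :
    ∃ (x : X) (g : StrongDual ℝ Y), ‖x‖ ≤ 1 ∧ ‖g‖ ≤ 1 ∧ ρ < g (S x) ∧ ∀ i, f i (S x) = 0 := by
  let M := ⨅ i, LinearMap.ker ((f i ∘L S : X →L[ℝ] ℝ) : X →ₗ[ℝ] ℝ)
  have hM : IsClosed (M : Set X) := by
    rw [Submodule.coe_iInf]
    exact isClosed_iInter fun i => (f i ∘L S).isClosed_ker
  have hMn : Module.rank ℝ (X ⧸ M) < n :=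
    (rank_quotient_iInf_ker_le fun i => f i ∘L S).trans_lt (by exact_mod_cast hι)
  obtain ⟨x, hx, hρx⟩ :=
    (S ∘L M.subtypeL).exists_lt_apply_of_lt_opNorm (hρ.trans_le (gelfandNumber_le S hM hMn))
  obtain ⟨g, hg, hgx⟩ := exists_dual_vector'' ℝ (S x)
  refine ⟨x, g, by simpa using hx.le, hg, by simpa [hgx] using hρx, fun i => ?_⟩
  simpa using Submodule.mem_iInf _ |>.1 x.2 i

theorem exists_triangular_of_lt_gelfandNumber (S : X →L[ℝ] Y) {n : ℕ} {ρ : ℝ}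
    (hρ : ρ < gelfandNumber n S) :
    ∃ (x : Fin n → X) (b : Fin n → StrongDual ℝ Y), (∀ i, ‖x i‖ ≤ 1) ∧ (∀ i, ‖b i‖ ≤ 1) ∧
      (∀ i, ρ < b i (S (x i))) ∧ ∀ i j, i < j → b i (S (x j)) = 0 := by
  suffices ∀ m ≤ n, ∃ (x : Fin m → X) (b : Fin m → StrongDual ℝ Y), (∀ i, ‖x i‖ ≤ 1) ∧
      (∀ i, ‖b i‖ ≤ 1) ∧ (∀ i, ρ < b i (S (x i))) ∧ ∀ i j, i < j → b i (S (x j)) = 0 from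
    this n le_rfl
  intro m hm
  induction m with
  | zero => exact ⟨finZeroElim, finZeroElim, finZeroElim, finZeroElim, finZeroElim, finZeroElim⟩
  | succ m ih =>
    obtain ⟨x, b, hx, hb, hdiag, htri⟩ := ih (by omega)
    obtain ⟨y, g, hy, hg, hgy, hby⟩ :=
      exists_norm_le_one_lt_apply_of_lt_gelfandNumber S hρ (by simpa using hm) b
    refine ⟨Fin.snoc x y, Fin.snoc b g, Fin.lastCases (by simpa) (by simpa),
      Fin.lastCases (by simpa) (by simpa), Fin.lastCases (by simpa) (by simpa), ?_⟩
    intro i j hij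
    induction j using Fin.lastCases with
    | last =>
      obtain ⟨i, rfl⟩ := Fin.exists_castSucc_eq.2 hij.ne
      simpa using hby i
    | cast j =>
      obtain ⟨i, rfl⟩ := Fin.exists_castSucc_eq.2 (hij.trans (Fin.castSucc_lt_last j)).ne
      simpa using htri i j (Fin.castSucc_lt_castSucc_iff.1 hij)

end GelfandNumber

theorem prod_div_rpow_le {α : ℝ} (hα : 0 ≤ α) (n : ℕ) :
    ∏ k ∈ Finset.range n, ((n : ℝ) / ((k + 1 : ℕ) : ℝ) ^ α) ≤
      (Real.exp 1 ^ α * (n : ℝ) ^ (-α + 1)) ^ n := by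
  obtain rfl | hn := n.eq_zero_or_pos
  · simp
  have hn' : (0 : ℝ) < n := by exact_mod_cast hn
  have hfact : ∏ k ∈ Finset.range n, ((k + 1 : ℕ) : ℝ) ^ α = (n.factorial : ℝ) ^ α := by
    rw [Real.finsetProd_rpow _ _ fun _ _ => by positivity, ← Nat.cast_prod,
      Finset.prod_range_add_one_eq_factorial]
  have hfactorial : (n : ℝ) ^ n / Real.exp 1 ^ n ≤ n.factorial := by
    have := Real.pow_div_factorial_le_exp _ n.cast_nonneg n
    rw [div_le_iff₀ (by positivity)] at this
    rw [Real.exp_one_pow, div_le_iff₀ (by positivity)]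
    linarith
  have hrhs : (Real.exp 1 ^ α * (n : ℝ) ^ (-α + 1)) ^ n =
      (n : ℝ) ^ n / ((n : ℝ) ^ n / Real.exp 1 ^ n) ^ α := by
    rw [← div_pow, ← Real.rpow_pow_comm (by positivity), ← div_pow, Real.div_rpow hn'.le
      (by positivity), Real.rpow_add hn', Real.rpow_neg hn'.le, Real.rpow_one]
    field_simp
  rw [Finset.prod_div_distrib, Finset.prod_const, Finset.card_range, hfact, hrhs]
  gcongr

section Factorization

variable {X Y : Type*} [NormedAddCommGroup X] [NormedSpace ℝ X]
  [NormedAddCommGroup Y] [NormedSpace ℝ Y]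

theorem norm_sum_smul_le_sqrt_card_mul {ι : Type*} [Fintype ι] {x : ι → X}
    (hx : ∀ i, ‖x i‖ ≤ 1) (v : EuclideanSpace ℝ ι) :
    ‖∑ i, v i • x i‖ ≤ √(Fintype.card ι) * ‖v‖ :=
  calc ‖∑ i, v i • x i‖ ≤ ∑ i, 1 * |v i| := (norm_sum_le _ _).trans <| Finset.sum_le_sum
        fun i _ => by rw [norm_smul, Real.norm_eq_abs, mul_comm]; gcongr; exact hx i
    _ ≤ √(Fintype.card ι) * ‖v‖ := by
        simpa [EuclideanSpace.norm_eq] using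
          Real.sum_mul_le_sqrt_mul_sqrt Finset.univ (fun _ => (1 : ℝ)) fun i => |v i|

theorem norm_toLp_apply_le_sqrt_card_mul {ι : Type*} [Fintype ι] {b : ι → StrongDual ℝ Y}
    (hb : ∀ i, ‖b i‖ ≤ 1) (y : Y) :
    ‖(WithLp.toLp 2 fun i => b i y : EuclideanSpace ℝ ι)‖ ≤ √(Fintype.card ι) * ‖y‖ := by
  rw [EuclideanSpace.norm_eq, ← Real.sqrt_sq (norm_nonneg y), ← Real.sqrt_mul (by positivity)]
  gcongr
  calc ∑ i, ‖b i y‖ ^ 2 ≤ ∑ _i : ι, ‖y‖ ^ 2 := Finset.sum_le_sum fun i _ => by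
        gcongr; exact ((b i).le_opNorm y).trans (mul_le_of_le_one_left (norm_nonneg y) (hb i))
    _ = Fintype.card ι * ‖y‖ ^ 2 := by simp

theorem abs_det_le_prod_hilbertNumber (S : X →L[ℝ] Y) {n : ℕ} {x : Fin n → X}
    {b : Fin n → StrongDual ℝ Y} (hx : ∀ i, ‖x i‖ ≤ 1) (hb : ∀ i, ‖b i‖ ≤ 1) :
    |(Matrix.of fun i j => b i (S (x j))).det| ≤
      ∏ k ∈ Finset.range n, (n * hilbertNumber (k + 1) S) := by
  let A : EuclideanSpace ℝ (Fin n) →L[ℝ] X := ∑ i, (EuclideanSpace.proj i).smulRight (x i)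
  let B : Y →L[ℝ] EuclideanSpace ℝ (Fin n) :=
    (EuclideanSpace.equiv (Fin n) ℝ).symm.toContinuousLinearMap ∘L .pi b
  have hA v : A v = ∑ i, v i • x i := by simp [A]
  have hB y : B y = WithLp.toLp 2 fun i => b i y := rfl
  have hBA : ‖B‖ * ‖A‖ ≤ n := by
    have hA' : ‖A‖ ≤ √n := A.opNorm_le_bound (by positivity) fun v => by
      simpa [hA] using norm_sum_smul_le_sqrt_card_mul hx v
    have hB' : ‖B‖ ≤ √n := B.opNorm_le_bound (by positivity) fun y => by
      simpa [hB] using norm_toLp_apply_le_sqrt_card_mul hb y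
    calc ‖B‖ * ‖A‖ ≤ √n * √n := by gcongr
      _ = n := Real.mul_self_sqrt n.cast_nonneg
  have hmatrix : Matrix.of (fun i j => b i (S (x j))) = LinearMap.toMatrix
      (EuclideanSpace.basisFun (Fin n) ℝ).toBasis (EuclideanSpace.basisFun (Fin n) ℝ).toBasis
      (B ∘L S ∘L A : EuclideanSpace ℝ (Fin n) →ₗ[ℝ] EuclideanSpace ℝ (Fin n)) := by
    ext i j
    simp [LinearMap.toMatrix_apply, hA, hB]
  rw [hmatrix, LinearMap.det_toMatrix]
  calc _ ≤ ∏ k ∈ Finset.range n, approxNumber (k + 1) (B ∘L S ∘L A) := by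
        simpa using abs_det_le_prod_approxNumber (B ∘L S ∘L A)
    _ ≤ ∏ k ∈ Finset.range n, (n * hilbertNumber (k + 1) S) :=
        Finset.prod_le_prod (fun _ _ => approxNumber_nonneg _ _) fun k _ =>
          (approxNumber_comp_comp_le_hilbertNumber_mul _ S A B).trans <| by
            rw [mul_comm]; gcongr; exact hilbertNumber_nonneg _ S

theorem pow_le_prod_hilbertNumber_of_lt_gelfandNumber (S : X →L[ℝ] Y) {n : ℕ} {ρ : ℝ}
    (hρ₀ : 0 ≤ ρ) (hρ : ρ < gelfandNumber n S) :
    ρ ^ n ≤ ∏ k ∈ Finset.range n, (n * hilbertNumber (k + 1) S) := by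
  obtain ⟨x, b, hx, hb, hdiag, htri⟩ := exists_triangular_of_lt_gelfandNumber S hρ
  calc ρ ^ n = ∏ _i : Fin n, ρ := (Fin.prod_const n ρ).symm
    _ ≤ ∏ i, b i (S (x i)) := Finset.prod_le_prod (fun _ _ => hρ₀) fun i _ => (hdiag i).le
    _ = (Matrix.of fun i j => b i (S (x j))).det :=
        (Matrix.det_of_isLowerTriangular _ fun i j hij => htri i j hij).symm
    _ ≤ |(Matrix.of fun i j => b i (S (x j))).det| := le_abs_self _
    _ ≤ _ := abs_det_le_prod_hilbertNumber S hx hb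

theorem prod_mul_hilbertNumber_le_pow (S : X →L[ℝ] Y) {α : ℝ} (hα : 0 ≤ α) {n : ℕ} {σ : ℝ}
    (hσ : ∀ k ∈ Finset.Icc 1 n, (k : ℝ) ^ α * hilbertNumber k S ≤ σ) :
    ∏ k ∈ Finset.range n, (n * hilbertNumber (k + 1) S) ≤
      (Real.exp 1 ^ α * (n : ℝ) ^ (-α + 1) * σ) ^ n := by
  obtain rfl | hn := n.eq_zero_or_pos
  · simp
  have hσ₀ : 0 ≤ σ :=
    (mul_nonneg (by positivity) (hilbertNumber_nonneg 1 S)).trans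
      (hσ 1 (Finset.mem_Icc.2 ⟨le_rfl, hn⟩))
  have hfactor (k : ℕ) (hk : k ∈ Finset.range n) :
      n * hilbertNumber (k + 1) S ≤ σ * ((n : ℝ) / ((k + 1 : ℕ) : ℝ) ^ α) := by
    have := mul_le_mul_of_nonneg_left
      (hσ (k + 1) (Finset.mem_Icc.2 ⟨k.succ_pos, Finset.mem_range.1 hk⟩)) (n.cast_nonneg (α := ℝ))
    rw [mul_div_assoc', le_div_iff₀ (by positivity)]
    linarith
  calc _ ≤ ∏ k ∈ Finset.range n, σ * ((n : ℝ) / ((k + 1 : ℕ) : ℝ) ^ α) :=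
        Finset.prod_le_prod (fun k _ => mul_nonneg n.cast_nonneg (hilbertNumber_nonneg _ S))
          hfactor
    _ ≤ σ ^ n * (Real.exp 1 ^ α * (n : ℝ) ^ (-α + 1)) ^ n := by
        rw [Finset.prod_mul_distrib, Finset.prod_const, Finset.card_range]
        gcongr
        exact prod_div_rpow_le hα n
    _ = _ := by ring

end Factorization

theorem gelfand_le_exp_mul_sup_hilbert_general
    {X Y : Type*} [NormedAddCommGroup X] [NormedSpace ℝ X]
    [NormedAddCommGroup Y] [NormedSpace ℝ Y]
    (S : X →L[ℝ] Y) (α : ℝ) (hα : 0 < α) (n : ℕ) (hn : 1 ≤ n) :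
    gelfandNumber n S ≤
      Real.exp 1 ^ α * (n : ℝ) ^ (-α + 1) *
        (Finset.Icc 1 n).sup' (Finset.nonempty_Icc.mpr hn)
          (fun k => (k : ℝ) ^ α * hilbertNumber k S) := by
  set σ := (Finset.Icc 1 n).sup' (Finset.nonempty_Icc.mpr hn)
    fun k => (k : ℝ) ^ α * hilbertNumber k S
  have hle_σ (k : ℕ) (hk : k ∈ Finset.Icc 1 n) : (k : ℝ) ^ α * hilbertNumber k S ≤ σ :=
    Finset.le_sup' (fun k : ℕ => (k : ℝ) ^ α * hilbertNumber k S) hk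
  have hR : 0 ≤ Real.exp 1 ^ α * (n : ℝ) ^ (-α + 1) * σ := mul_nonneg (by positivity) <|
    (mul_nonneg (by positivity) (hilbertNumber_nonneg 1 S)).trans
      (hle_σ 1 (Finset.mem_Icc.2 ⟨le_rfl, hn⟩))
  refine forall_lt_imp_le_iff_le_of_dense.1 fun ρ hρ => ?_
  obtain hρ₀ | hρ₀ := lt_or_ge ρ 0
  · exact hρ₀.le.trans hR
  · exact le_of_pow_le_pow_left₀ (by omega) hR <|
      (pow_le_prod_hilbertNumber_of_lt_gelfandNumber S hρ₀ hρ).trans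
        (prod_mul_hilbertNumber_le_pow S hα.le hle_σ)

theorem gelfand_le_exp_mul_sup_hilbert
    {X Y : Type*} [NormedAddCommGroup X] [NormedSpace ℝ X] [CompleteSpace X]
    [NormedAddCommGroup Y] [NormedSpace ℝ Y] [CompleteSpace Y]
    (S : X →L[ℝ] Y) (α : ℝ) (hα : 0 < α) (n : ℕ) (hn : 1 ≤ n) :
    gelfandNumber n S ≤
      Real.exp 1 ^ α * (n : ℝ) ^ (-α + 1) *
        (Finset.Icc 1 n).sup' (Finset.nonempty_Icc.mpr hn)
          (fun k => (k : ℝ) ^ α * hilbertNumber k S) :=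
  gelfand_le_exp_mul_sup_hilbert_general S α hα n hn
end

section
/- Let n ≥ 1 and 0 < σ < 1, and let T_n be the n × n real matrix with entries (T_n)_{ij} = δ_{j,i+1} + σ · δ_{i,n} δ_{j,1}, regarded as a bounded linear operator on the n-dimensional real Euclidean space ℓ₂ⁿ. Then its approximation numbers satisfy a_k(T_n) = 1 for all 1 ≤ k < n, and a_n(T_n) = σ. -/
open Module

namespace LinearMap

universe u v w

variable {K : Type u} {V : Type v} {W : Type w} [DivisionRing K] [AddCommGroup V] [Module K V]
  [AddCommGroup W] [Module K W]

theorem exists_mem_ne_zero_map_eq_zero_of_rank_lt {k : ℕ} (f : V →ₗ[K] W) (U : Submodule K V)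
    (hf : f.rank < k) (hU : k ≤ Module.rank K U) : ∃ x ∈ U, x ≠ 0 ∧ f x = 0 := by
  by_contra! hU0
  have hinj : Function.Injective (f.comp U.subtype) := by
    rw [← LinearMap.ker_eq_bot, Submodule.eq_bot_iff]
    intro x hx
    by_contra hx0
    exact hU0 x x.2 (by simpa using hx0) hx
  have hrange := lift_rank_range_of_injective _ hinj
  have hcomp := Cardinal.lift_lt.{w, v}.2 ((rank_comp_le_left U.subtype f).trans_lt hf)
  have hk := Cardinal.lift_le.{w, v}.2 hU
  simp only [Cardinal.lift_natCast] at hcomp hk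
  exact (hk.trans_eq hrange.symm).not_gt hcomp

theorem rank_lt_finrank_of_map_eq_zero [FiniteDimensional K V] (f : V →ₗ[K] W) {x : V}
    (hx : x ≠ 0) (hfx : f x = 0) : f.rank < finrank K V := by
  have hker : 0 < finrank K (ker f) :=
    Module.finrank_pos_iff_exists_ne_zero.2 ⟨⟨x, hfx⟩, by simpa [Subtype.ext_iff] using hx⟩
  have := finrank_range_add_finrank_ker f
  rw [LinearMap.rank, ← finrank_eq_rank]
  exact_mod_cast (by omega : finrank K (range f) < finrank K V)

end LinearMap

section approxNumber

variable {X Y : Type*} [NormedAddCommGroup X] [NormedSpace ℝ X] [NormedAddCommGroup Y]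
  [NormedSpace ℝ Y]

theorem approxNumber_le_norm_sub {k : ℕ} (S L : X →L[ℝ] Y) (hL : (L : X →ₗ[ℝ] Y).rank < k) :
    approxNumber k S ≤ ‖S - L‖ :=
  csInf_le ⟨0, by rintro _ ⟨L, -, rfl⟩; positivity⟩ ⟨L, hL, rfl⟩

theorem approxNumber_le_opNorm {k : ℕ} (hk : 1 ≤ k) (S : X →L[ℝ] Y) :
    approxNumber k S ≤ ‖S‖ := by
  simpa using approxNumber_le_norm_sub S 0 (by
    rw [ContinuousLinearMap.toLinearMap_zero, LinearMap.rank_zero]; exact_mod_cast hk)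

theorem le_approxNumber_of_le_rank {k : ℕ} (hk : 1 ≤ k) (S : X →L[ℝ] Y) (U : Submodule ℝ X)
    (hU : (k : Cardinal) ≤ Module.rank ℝ U) {c : ℝ} (hc : ∀ x ∈ U, c * ‖x‖ ≤ ‖S x‖) :
    c ≤ approxNumber k S := by
  refine le_csInf ⟨_, 0, ?_, rfl⟩ ?_
  · rw [ContinuousLinearMap.toLinearMap_zero, LinearMap.rank_zero]; exact_mod_cast hk
  rintro _ ⟨L, hL, rfl⟩
  obtain ⟨x, hxU, hx0, hLx⟩ :=
    LinearMap.exists_mem_ne_zero_map_eq_zero_of_rank_lt _ U hL hU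
  have hSLx : (S - L) x = S x := by simpa using hLx
  refine le_of_mul_le_mul_right ?_ (norm_pos_iff.2 hx0)
  calc c * ‖x‖ ≤ ‖(S - L) x‖ := hSLx ▸ hc x hxU
    _ ≤ ‖S - L‖ * ‖x‖ := (S - L).le_opNorm x

end approxNumber

theorem EuclideanSpace.finrank_ker_proj {𝕜 ι : Type*} [RCLike 𝕜] [Fintype ι] [DecidableEq ι]
    (i : ι) :
    finrank 𝕜 (LinearMap.ker (EuclideanSpace.proj i : EuclideanSpace 𝕜 ι →L[𝕜] 𝕜).toLinearMap) + 1 =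
      Fintype.card ι := by
  rw [Module.Dual.finrank_ker_add_one_of_ne_zero, finrank_euclideanSpace]
  intro h
  simpa using LinearMap.congr_fun h (EuclideanSpace.single i 1)

/-- The paper's `T_n` for `n = m + 1`; `i + 1` is computed in `Fin (m + 1)`, i.e. cyclically. -/
def weightedShiftMatrix (m : ℕ) (σ : ℝ) : Matrix (Fin (m + 1)) (Fin (m + 1)) ℝ :=
  Matrix.of fun i j => if j = i + 1 then if i = Fin.last m then σ else 1 else 0

noncomputable def weightedShift (m : ℕ) (σ : ℝ) :
    EuclideanSpace ℝ (Fin (m + 1)) →L[ℝ] EuclideanSpace ℝ (Fin (m + 1)) :=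
  (Matrix.toEuclideanLin (weightedShiftMatrix m σ)).toContinuousLinearMap

section weightedShift

variable {m : ℕ} {σ : ℝ}

theorem eq_weightedShiftMatrix {T : Matrix (Fin (m + 1)) (Fin (m + 1)) ℝ}
    (hT : ∀ i j : Fin (m + 1), T i j =
      (if (j : ℕ) = (i : ℕ) + 1 then 1 else 0) +
        σ * (if (i : ℕ) = m then 1 else 0) * (if (j : ℕ) = 0 then 1 else 0)) :
    T = weightedShiftMatrix m σ := by
  ext i j
  simp only [hT, weightedShiftMatrix, Matrix.of_apply, Fin.ext_iff, Fin.val_add_one, Fin.val_last]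
  have := j.isLt
  split_ifs <;> first | omega | simp

theorem weightedShift_apply (x : EuclideanSpace ℝ (Fin (m + 1))) (i : Fin (m + 1)) :
    weightedShift m σ x i = (if i = Fin.last m then σ else 1) * x (i + 1) := by
  simp [weightedShift, weightedShiftMatrix, Matrix.mulVec, dotProduct]

theorem norm_sq_weightedShift_apply (x : EuclideanSpace ℝ (Fin (m + 1))) :
    ‖weightedShift m σ x‖ ^ 2 = ‖x‖ ^ 2 - (1 - σ ^ 2) * x 0 ^ 2 := by
  have hshift : ∑ i, x (i + 1) ^ 2 = ∑ i, x i ^ 2 :=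
    Fintype.sum_equiv (Equiv.addRight 1) _ _ fun _ => rfl
  have hterm : ∀ i, ((if i = Fin.last m then σ else 1) * x (i + 1)) ^ 2 =
      x (i + 1) ^ 2 - if i = Fin.last m then (1 - σ ^ 2) * x 0 ^ 2 else 0 := by
    intro i
    split_ifs with hi
    · rw [hi, Fin.last_add_one]; ring
    · ring
  simp only [EuclideanSpace.real_norm_sq_eq, weightedShift_apply, hterm, Finset.sum_sub_distrib,
    Finset.sum_ite_eq', Finset.mem_univ, if_true, hshift]

theorem norm_weightedShift_apply_le (hσ : |σ| ≤ 1) (x : EuclideanSpace ℝ (Fin (m + 1))) :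
    ‖weightedShift m σ x‖ ≤ ‖x‖ := by
  have hσ2 : σ ^ 2 ≤ 1 := sq_le_one_iff_abs_le_one σ |>.2 hσ
  rw [← sq_le_sq₀ (norm_nonneg _) (norm_nonneg _), norm_sq_weightedShift_apply]
  nlinarith [sq_nonneg (x 0)]

theorem norm_weightedShift_apply_of_apply_zero {x : EuclideanSpace ℝ (Fin (m + 1))}
    (hx : x 0 = 0) : ‖weightedShift m σ x‖ = ‖x‖ := by
  rw [← sq_eq_sq₀ (norm_nonneg _) (norm_nonneg _), norm_sq_weightedShift_apply, hx]
  ring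

theorem mul_norm_le_norm_weightedShift_apply (hσ0 : 0 ≤ σ) (hσ1 : σ ≤ 1)
    (x : EuclideanSpace ℝ (Fin (m + 1))) : σ * ‖x‖ ≤ ‖weightedShift m σ x‖ := by
  have hx0 : x 0 ^ 2 ≤ ‖x‖ ^ 2 := by
    simpa [sq_abs] using pow_le_pow_left₀ (norm_nonneg _) (PiLp.norm_apply_le x 0) 2
  have hσ2 : 0 ≤ 1 - σ ^ 2 := by nlinarith
  rw [← sq_le_sq₀ (by positivity) (norm_nonneg _), norm_sq_weightedShift_apply]
  nlinarith [mul_le_mul_of_nonneg_left hx0 hσ2]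

theorem norm_weightedShift_single_zero (hσ0 : 0 ≤ σ) (a : ℝ) :
    ‖weightedShift m σ (EuclideanSpace.single 0 a)‖ = σ * |a| := by
  rw [← sq_eq_sq₀ (norm_nonneg _) (by positivity), norm_sq_weightedShift_apply,
    PiLp.norm_single]
  simp only [PiLp.single_apply, if_true, Real.norm_eq_abs, mul_pow, sq_abs]
  ring

theorem approxNumber_weightedShift_of_le {k : ℕ} (hk1 : 1 ≤ k) (hkm : k ≤ m) (hσ : |σ| ≤ 1) :
    approxNumber k (weightedShift m σ) = 1 := by
  apply le_antisymm
  · refine (approxNumber_le_opNorm hk1 _).trans ?_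
    exact (weightedShift m σ).opNorm_le_bound zero_le_one fun x => by
      simpa using norm_weightedShift_apply_le hσ x
  · have hrank : (k : Cardinal) ≤
        Module.rank ℝ (LinearMap.ker
          (EuclideanSpace.proj (0 : Fin (m + 1)) : EuclideanSpace ℝ _ →L[ℝ] ℝ).toLinearMap) := by
      have := EuclideanSpace.finrank_ker_proj (𝕜 := ℝ) (0 : Fin (m + 1))
      rw [Fintype.card_fin] at this
      rw [← finrank_eq_rank]
      exact_mod_cast (by omega)
    refine le_approxNumber_of_le_rank hk1 _ _ hrank fun x hx => ?_
    rw [one_mul, norm_weightedShift_apply_of_apply_zero hx]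

theorem approxNumber_weightedShift (hσ0 : 0 ≤ σ) (hσ1 : σ ≤ 1) :
    approxNumber (m + 1) (weightedShift m σ) = σ := by
  apply le_antisymm
  · set A := weightedShift m σ
    set P : EuclideanSpace ℝ (Fin (m + 1)) →L[ℝ] EuclideanSpace ℝ (Fin (m + 1)) :=
      (EuclideanSpace.proj 0).smulRight (EuclideanSpace.single 0 1)
    have hP : ∀ x, P x = EuclideanSpace.single 0 (x 0) := fun x => by
      ext i; simp [P]
    set L₀ := A - A.comp P
    have hrank : L₀.toLinearMap.rank < ↑(m + 1) := by
      have := L₀.toLinearMap.rank_lt_finrank_of_map_eq_zero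
        (x := EuclideanSpace.single 0 1) (by simp) (by simp [L₀, hP])
      rwa [finrank_euclideanSpace_fin] at this
    calc approxNumber (m + 1) A ≤ ‖A - L₀‖ := approxNumber_le_norm_sub _ _ hrank
      _ ≤ σ := by
        rw [sub_sub_cancel]
        refine (A.comp P).opNorm_le_bound hσ0 fun x => ?_
        rw [ContinuousLinearMap.comp_apply, hP, norm_weightedShift_single_zero hσ0]
        exact mul_le_mul_of_nonneg_left (PiLp.norm_apply_le x 0) hσ0
  · refine le_approxNumber_of_le_rank (by omega) _ ⊤ ?_ fun x _ =>
      mul_norm_le_norm_weightedShift_apply hσ0 hσ1 x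
    rw [rank_top, ← finrank_eq_rank, finrank_euclideanSpace_fin]

end weightedShift

theorem approxNumbers_of_shift_matrix (n : ℕ) (hn : 1 ≤ n) (σ : ℝ) (hσ0 : 0 < σ) (hσ1 : σ < 1)
    (T : Matrix (Fin n) (Fin n) ℝ)
    (hT : ∀ i j : Fin n, T i j =
      (if (j : ℕ) = (i : ℕ) + 1 then 1 else 0) +
        σ * (if (i : ℕ) = n - 1 then 1 else 0) * (if (j : ℕ) = 0 then 1 else 0)) :
    (∀ k : ℕ, 1 ≤ k → k < n →
        approxNumber k (Matrix.toEuclideanLin T).toContinuousLinearMap = 1) ∧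
      approxNumber n (Matrix.toEuclideanLin T).toContinuousLinearMap = σ := by
  obtain ⟨m, rfl⟩ : ∃ m, n = m + 1 := ⟨n - 1, by omega⟩
  obtain rfl : T = weightedShiftMatrix m σ := eq_weightedShiftMatrix (by simpa using hT)
  exact ⟨fun k hk1 hkn => approxNumber_weightedShift_of_le hk1 (by omega)
      (abs_le.2 ⟨by linarith, hσ1.le⟩),
    approxNumber_weightedShift hσ0.le hσ1.le⟩
end
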